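/- arXiv:math/0703133 — 4 statements merged into one kernel-verified Lean document; each statement's English description precedes it below -/
import Mathlib

section
/- Let R be a commutative ring, J ⊆ R an ideal, and f: M → N a surjective homomorphism of R-modules. Let (P_m)_{m∈ℕ} be a tower of R-modules with R-linear transition maps p_m: P_{m+1} → P_m, such that for every m one has J^m•P_m = 0 and P_m is projective as a module over R/J^m. Let i: ℕ → ℕ be a strictly increasing function and let g_m: P_{i(m)} → N/J^mN be R-linear maps satisfying π_m ∘ g_{m+1} = g_m ∘ (the composite transition map P_{i(m+1)} → P_{i(m)}) for all m, where π_m: N/J^{m+1}N → N/J^mN is the natural surjection. Then there exist R-linear maps h_m: P_{i(m)} → M/J^mM satisfying the analogous compatibility with transitions (π'_m ∘ h_{m+1} = h_m ∘ (transition P_{i(m+1)} → P_{i(m)}), with π'_m: M/J^{m+1}M → M/J^mM the natural surjection) and such that f̄_m ∘ h_m = g_m for all m, where f̄_m: M/J^mM → N/J^mN is the map induced by f. -/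
variable {R : Type*} [CommRing R]

/-- The composite transition map `P b → P a` (for `a ≤ b`) of a tower of `R`-modules. -/
noncomputable def towerMap {P : ℕ → Type*} [∀ m, AddCommGroup (P m)] [∀ m, Module R (P m)]
    (p : ∀ m, P (m + 1) →ₗ[R] P m) : ∀ {a b : ℕ}, a ≤ b → (P b →ₗ[R] P a) :=
  fun {a _} h =>
    Nat.leRecOn h (fun {k} (g : P k →ₗ[R] P a) => g.comp (p k)) LinearMap.id

/-- The map `M/J^m M → N/J^m N` induced by an `R`-linear map `f : M → N`. -/
noncomputable def mapQPow (J : Ideal R) (m : ℕ)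
    {M N : Type*} [AddCommGroup M] [Module R M] [AddCommGroup N] [Module R N]
    (f : M →ₗ[R] N) :
    (M ⧸ (J ^ m • ⊤ : Submodule R M)) →ₗ[R] N ⧸ (J ^ m • ⊤ : Submodule R N) :=
  Submodule.mapQ _ _ f
    (Submodule.smul_le.2 fun r hr x _ => by
      simp only [Submodule.mem_comap, map_smul]
      exact Submodule.smul_mem_smul hr Submodule.mem_top)

/-- The natural surjection `M/J^{m+1} M → M/J^m M`. -/
noncomputable def transQPow (J : Ideal R) (m : ℕ)
    (M : Type*) [AddCommGroup M] [Module R M] :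
    (M ⧸ (J ^ (m + 1) • ⊤ : Submodule R M)) →ₗ[R] M ⧸ (J ^ m • ⊤ : Submodule R M) :=
  Submodule.mapQ _ _ LinearMap.id
    (by rw [Submodule.comap_id]
        exact Submodule.smul_mono_left (Ideal.pow_le_pow_right (Nat.le_succ m)))

/-!
Build `h` level by level, starting from `h 0 = 0` (everything vanishes modulo `J ^ 0`).
Since `f` is surjective, `J^m N = f (J^m M)`, so `M/J^{m+1}M` maps onto the fibre product of
`M/J^m M` and `N/J^{m+1}N` over `N/J^m N`. The pair `(h m ∘ transition, g (m+1))` is a map from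
`P (i (m+1))` to that fibre product; as `P (i (m+1))` is projective over `R/J^{i(m+1)}` and all
modules involved are killed by `J^{i(m+1)}`, it lifts to the required `h (m+1)`.
-/

theorem Module.IsTorsionBySet.exists_comp_eq_of_range_le {I : Ideal R}
    {C X Y : Type*} [AddCommGroup C] [Module R C] [AddCommGroup X] [Module R X]
    [AddCommGroup Y] [Module R Y]
    (hX : IsTorsionBySet R X I) (hC : IsTorsionBySet R C I)
    (hproj : letI := hC.module; Module.Projective (R ⧸ I) C)
    (π : X →ₗ[R] Y) (g : C →ₗ[R] Y) (hg : LinearMap.range g ≤ LinearMap.range π) :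
    ∃ h : C →ₗ[R] X, π ∘ₗ h = g := by
  have hπ : IsTorsionBySet R (LinearMap.range π) I := by
    rintro ⟨_, x, rfl⟩ a
    exact Subtype.ext <| by
      simp only [SetLike.val_smul, ← map_smul, hX, map_zero, ZeroMemClass.coe_zero]
  let := hX.module; let := hC.module; let := hπ.module
  have hmk : Function.Surjective (algebraMap R (R ⧸ I)) := Ideal.Quotient.mk_surjective
  obtain ⟨h, hh⟩ := Module.projective_lifting_property
    (π.rangeRestrict.extendScalarsOfSurjective hmk)
    ((g.codRestrict _ fun c => hg ⟨c, rfl⟩).extendScalarsOfSurjective hmk)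
    π.surjective_rangeRestrict
  exact ⟨h.restrictScalars R,
    LinearMap.ext fun c => congr_arg Subtype.val (LinearMap.congr_fun hh c)⟩

lemma exists_seq_of_forall_exists_succ {α : ℕ → Sort*} {Q : ∀ m, α m → Prop}
    {S : ∀ m, α m → α (m + 1) → Prop} (x₀ : α 0) (h₀ : Q 0 x₀)
    (step : ∀ m x, Q m x → ∃ y, S m x y ∧ Q (m + 1) y) :
    ∃ s : ∀ m, α m, ∀ m, S m (s m) (s (m + 1)) ∧ Q m (s m) := by
  choose next hS hQ using step
  let t : ∀ m, {x // Q m x} := fun m =>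
    Nat.rec ⟨x₀, h₀⟩ (fun k t => ⟨next k t.1 t.2, hQ k t.1 t.2⟩) m
  exact ⟨fun m => (t m).1, fun m => ⟨hS m _ (t m).2, (t m).2⟩⟩

@[simp]
lemma mapQPow_mk (J : Ideal R) (m : ℕ) {M N : Type*} [AddCommGroup M] [Module R M]
    [AddCommGroup N] [Module R N] (f : M →ₗ[R] N) (x : M) :
    mapQPow J m f (Submodule.Quotient.mk x) = Submodule.Quotient.mk (f x) := rfl

@[simp]
lemma transQPow_mk (J : Ideal R) (m : ℕ) (M : Type*) [AddCommGroup M] [Module R M] (x : M) :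
    transQPow J m M (Submodule.Quotient.mk x) = Submodule.Quotient.mk x := rfl

instance subsingleton_quotient_pow_zero_smul_top (J : Ideal R) (M : Type*) [AddCommGroup M]
    [Module R M] : Subsingleton (M ⧸ (J ^ 0 • ⊤ : Submodule R M)) := by
  rw [Submodule.Quotient.subsingleton_iff, pow_zero, Ideal.one_eq_top, Submodule.top_smul]

lemma Module.isTorsionBySet_quotient_pow_smul_top (J : Ideal R) {m k : ℕ} (hmk : m ≤ k)
    (M : Type*) [AddCommGroup M] [Module R M] :
    IsTorsionBySet R (M ⧸ (J ^ m • ⊤ : Submodule R M)) ((J ^ k : Ideal R) : Set R) := by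
  rw [isTorsionBySet_quotient_iff]
  exact fun _ r hr => Submodule.smul_mem_smul (Ideal.pow_le_pow_right hmk hr) Submodule.mem_top

lemma exists_transQPow_eq_mapQPow_eq (J : Ideal R) (m : ℕ) {M N : Type*} [AddCommGroup M]
    [Module R M] [AddCommGroup N] [Module R N] {f : M →ₗ[R] N} (hf : Function.Surjective f)
    (x : M ⧸ (J ^ m • ⊤ : Submodule R M)) (y : N ⧸ (J ^ (m + 1) • ⊤ : Submodule R N))
    (hxy : mapQPow J m f x = transQPow J m N y) :
    ∃ z, transQPow J m M z = x ∧ mapQPow J (m + 1) f z = y := by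
  obtain ⟨a, rfl⟩ := Submodule.Quotient.mk_surjective _ x
  obtain ⟨b, rfl⟩ := Submodule.Quotient.mk_surjective _ y
  rw [mapQPow_mk, transQPow_mk, Submodule.Quotient.eq] at hxy
  have hmap : (J ^ m • ⊤ : Submodule R N) = (J ^ m • ⊤ : Submodule R M).map f := by
    rw [Submodule.map_smul'', Submodule.map_top, LinearMap.range_eq_top.mpr hf]
  obtain ⟨c, hc, hfc⟩ : b - f a ∈ (J ^ m • ⊤ : Submodule R M).map f :=
    hmap ▸ by simpa using neg_mem hxy
  refine ⟨Submodule.Quotient.mk (a + c), ?_, ?_⟩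
  · rw [transQPow_mk, Submodule.Quotient.eq]
    simpa using hc
  · rw [mapQPow_mk, map_add, hfc, add_sub_cancel]

lemma exists_transQPow_comp_eq_mapQPow_comp_eq (J : Ideal R) {m k : ℕ} (hmk : m + 1 ≤ k)
    {M N : Type*} [AddCommGroup M] [Module R M] [AddCommGroup N] [Module R N]
    {f : M →ₗ[R] N} (hf : Function.Surjective f) {C : Type*} [AddCommGroup C] [Module R C]
    (hC : Module.IsTorsionBySet R C ((J ^ k : Ideal R) : Set R))
    (hproj : letI := hC.module; Module.Projective (R ⧸ J ^ k) C)
    (u : C →ₗ[R] M ⧸ (J ^ m • ⊤ : Submodule R M))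
    (v : C →ₗ[R] N ⧸ (J ^ (m + 1) • ⊤ : Submodule R N))
    (huv : mapQPow J m f ∘ₗ u = transQPow J m N ∘ₗ v) :
    ∃ h : C →ₗ[R] M ⧸ (J ^ (m + 1) • ⊤ : Submodule R M),
      transQPow J m M ∘ₗ h = u ∧ mapQPow J (m + 1) f ∘ₗ h = v := by
  obtain ⟨h, hh⟩ := Module.IsTorsionBySet.exists_comp_eq_of_range_le
    (Module.isTorsionBySet_quotient_pow_smul_top J hmk M) hC hproj
    ((transQPow J m M).prod (mapQPow J (m + 1) f)) (u.prod v) <| by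
      rintro _ ⟨c, rfl⟩
      obtain ⟨z, hzu, hzv⟩ :=
        exists_transQPow_eq_mapQPow_eq J m hf (u c) (v c) (LinearMap.congr_fun huv c)
      exact ⟨z, Prod.ext hzu hzv⟩
  exact ⟨h, LinearMap.ext fun c => congr_arg Prod.fst (LinearMap.congr_fun hh c),
    LinearMap.ext fun c => congr_arg Prod.snd (LinearMap.congr_fun hh c)⟩

/-- **Lifting lemma for towers of levelwise projective modules.**
Let `J ⊆ R` be an ideal, `f : M → N` a surjection of `R`-modules, and `(P m)` a tower
of `R`-modules such that `J^m • P m = 0` and `P m` is projective over `R/J^m`.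
Any morphism of pro-modules `{P m} → {N/J^m N}`, given by maps
`g m : P (i m) → N/J^m N` (for a strictly increasing reindexing `i`) compatible with the
transition maps, lifts to a compatible family `h m : P (i m) → M/J^m M` with
`f̄ m ∘ h m = g m`. -/
theorem exists_lift_of_tower_projective (J : Ideal R)
    {M N : Type*} [AddCommGroup M] [Module R M] [AddCommGroup N] [Module R N]
    (f : M →ₗ[R] N) (hf : Function.Surjective f)
    (P : ℕ → Type*) [∀ m, AddCommGroup (P m)] [∀ m, Module R (P m)]
    (p : ∀ m, P (m + 1) →ₗ[R] P m)
    (htors : ∀ m, Module.IsTorsionBySet R (P m) ((J ^ m : Ideal R) : Set R))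
    (hproj : ∀ m, letI := (htors m).module; Module.Projective (R ⧸ J ^ m) (P m))
    (i : ℕ → ℕ) (hi : StrictMono i)
    (g : ∀ m, P (i m) →ₗ[R] N ⧸ (J ^ m • ⊤ : Submodule R N))
    (hg : ∀ m, (transQPow J m N).comp (g (m + 1))
      = (g m).comp (towerMap p (hi (Nat.lt_succ_self m)).le)) :
    ∃ h : ∀ m, P (i m) →ₗ[R] M ⧸ (J ^ m • ⊤ : Submodule R M),
      (∀ m, (transQPow J m M).comp (h (m + 1))
        = (h m).comp (towerMap p (hi (Nat.lt_succ_self m)).le)) ∧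
      (∀ m, (mapQPow J m f).comp (h m) = g m) := by
  obtain ⟨h, hh⟩ := exists_seq_of_forall_exists_succ
    (Q := fun m (hm : P (i m) →ₗ[R] M ⧸ (J ^ m • ⊤ : Submodule R M)) =>
      mapQPow J m f ∘ₗ hm = g m)
    (S := fun m hm hm' =>
      transQPow J m M ∘ₗ hm' = hm ∘ₗ towerMap p (hi (Nat.lt_succ_self m)).le)
    0 (LinearMap.ext fun _ => Subsingleton.elim _ _) fun m hm hgm =>
      exists_transQPow_comp_eq_mapQPow_comp_eq J hi.le_apply hf (htors _) (hproj _) _ _ <| by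
        rw [hg m, ← hgm, LinearMap.comp_assoc]
  exact ⟨h, fun m => (hh m).1, fun m => (hh m).2⟩
end

section
/- Let R be a commutative noetherian ring, J ⊆ R an ideal, M a finitely generated R-module, and let ⋯ → L_2 → L_1 → L_0 →^ε M → 0 be an exact sequence of R-modules in which every L_n is finitely generated. Write L_{-1} = M, d_0 = ε, and d_n: L_n → L_{n-1} for the differentials. Then for every n ≥ 0 and every m ∈ ℕ there exists m' ≥ m such that: whenever x ∈ L_n satisfies d_n(x) ∈ J^{m'}•L_{n-1}, there exists y ∈ L_{n+1} with x − d_{n+1}(y) ∈ J^m•L_n. (Together with the surjectivity of each induced map L_0/J^mL_0 → M/J^mM, this says that {L_*/J^mL_*}_m → {M/J^mM}_m is a resolution in the category of pro-R-modules.) -/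
/-- Universe-polymorphic Artin–Rees lemma. -/
lemma artin_rees_poly {R : Type u} [CommRing R] [IsNoetherianRing R] (I : Ideal R)
    {M : Type v} [AddCommGroup M] [Module R M] [Module.Finite R M]
    (N : Submodule R M) :
    ∃ k : ℕ, ∀ n ≥ k, (I ^ n • ⊤ ⊓ N : Submodule R M) = I ^ (n - k) • (I ^ k • ⊤ ⊓ N) := by
  obtain ⟨p, π, hπ⟩ := Module.Finite.exists_fin' R M
  let e : ((Fin p → R) ⧸ LinearMap.ker π) ≃ₗ[R] M := π.quotKerEquivOfSurjective hπ
  have hinj : Function.Injective (e.toLinearMap : ((Fin p → R) ⧸ LinearMap.ker π) →ₗ[R] M) :=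
    e.injective
  obtain ⟨k, hk⟩ := Ideal.exists_pow_inf_eq_pow_smul I (N.comap e.toLinearMap)
  refine ⟨k, fun n hn => ?_⟩
  have := congrArg (Submodule.map (e : ((Fin p → R) ⧸ LinearMap.ker π) →ₗ[R] M)) (hk n hn)
  have hmapN : Submodule.map (e : ((Fin p → R) ⧸ LinearMap.ker π) →ₗ[R] M)
      (N.comap e.toLinearMap) = N :=
    Submodule.map_comap_eq_of_surjective e.surjective N
  rw [Submodule.map_inf _ hinj, Submodule.map_smul'', Submodule.map_smul'',
    Submodule.map_inf _ hinj, Submodule.map_smul'', Submodule.map_top,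
    LinearMap.range_eq_top (f := e.toLinearMap) |>.mpr e.surjective, hmapN] at this
  exact this

lemma aux_step {R : Type*} [CommRing R] [IsNoetherianRing R] (J : Ideal R)
    {A B C : Type*} [AddCommGroup A] [Module R A] [Module.Finite R A]
    [AddCommGroup B] [Module R B] [Module.Finite R B]
    [AddCommGroup C] [Module R C]
    (f : A →ₗ[R] B) (g : C →ₗ[R] A) (hex : LinearMap.ker f = LinearMap.range g)
    (m : ℕ) : ∃ m' : ℕ, m ≤ m' ∧ ∀ x : A, f x ∈ (J ^ m' • ⊤ : Submodule R B) →
      ∃ y : C, x - g y ∈ (J ^ m • ⊤ : Submodule R A) := by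
  obtain ⟨k, hk⟩ := artin_rees_poly J (LinearMap.range f)
  refine ⟨m + k, le_self_add, fun x hx => ?_⟩
  have h1 : f x ∈ (J ^ (m + k) • ⊤ ⊓ LinearMap.range f : Submodule R B) :=
    ⟨hx, x, rfl⟩
  rw [hk (m + k) le_add_self] at h1
  have h2 : f x ∈ (J ^ m • LinearMap.range f : Submodule R B) := by
    have he : m + k - k = m := by omega
    rw [he] at h1
    exact Submodule.smul_mono le_rfl inf_le_right h1
  rw [← Submodule.map_top, ← Submodule.map_smul''] at h2
  obtain ⟨z, hz, hfz⟩ := h2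
  have hker : x - z ∈ LinearMap.ker f := by simp [LinearMap.mem_ker, map_sub, hfz]
  rw [hex] at hker
  obtain ⟨y, hy⟩ := hker
  exact ⟨y, by rw [hy]; simpa using hz⟩


/-- **Reduction of resolutions modulo powers of an ideal.**
Let `R` be a commutative noetherian ring, `J ⊆ R` an ideal, `M` a finitely generated
`R`-module, and `⋯ → L 1 → L 0 → M → 0` an exact sequence of finitely generated
`R`-modules (with `ε : L 0 → M` and differentials `d n : L (n+1) → L n`).  Then for
every degree and every `m` there is `m' ≥ m` such that any cycle modulo `J^{m'}` is a
boundary modulo `J^m`: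
in degree `0`, if `ε x ∈ J^{m'}•M` then `x - d 0 y ∈ J^m•(L 0)` for some `y`, and in
degree `n+1`, if `d n x ∈ J^{m'}•(L n)` then `x - d (n+1) y ∈ J^m•(L (n+1))` for some
`y`.  (Together with the surjectivity of each `L 0/J^m L 0 → M/J^m M`, this says that
`{L ∗/J^m L ∗} → {M/J^m M}` is a resolution in the category of pro-`R`-modules.) -/
theorem pro_resolution_mod_powers
    {R : Type*} [CommRing R] [IsNoetherianRing R] (J : Ideal R)
    {M : Type*} [AddCommGroup M] [Module R M] [Module.Finite R M]
    (L : ℕ → Type*) [∀ n, AddCommGroup (L n)] [∀ n, Module R (L n)]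
    [∀ n, Module.Finite R (L n)]
    (ε : L 0 →ₗ[R] M) (d : ∀ n, L (n + 1) →ₗ[R] L n)
    (hsurj : Function.Surjective ε)
    (hex0 : LinearMap.ker ε = LinearMap.range (d 0))
    (hex : ∀ n, LinearMap.ker (d n) = LinearMap.range (d (n + 1))) :
    (∀ m : ℕ, ∃ m' : ℕ, m ≤ m' ∧
      ∀ x : L 0, ε x ∈ (J ^ m' • ⊤ : Submodule R M) →
        ∃ y : L 1, x - d 0 y ∈ (J ^ m • ⊤ : Submodule R (L 0))) ∧
    (∀ n : ℕ, ∀ m : ℕ, ∃ m' : ℕ, m ≤ m' ∧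
      ∀ x : L (n + 1), d n x ∈ (J ^ m' • ⊤ : Submodule R (L n)) →
        ∃ y : L (n + 2), x - d (n + 1) y ∈ (J ^ m • ⊤ : Submodule R (L (n + 1)))) := by
  exact ⟨fun m => aux_step J ε (d 0) hex0 m,
    fun n m => aux_step J (d n) (d (n + 1)) (hex n) m⟩
end

section
/- Let R be a commutative ring and r_1, …, r_s ∈ R elements generating the unit ideal, i.e., (r_1, …, r_s)R = R. Let (M_m)_{m∈ℕ} be a tower of R-modules with transition maps M_{m+1} → M_m. For each i, consider the tower of localized modules (M_m[1/r_i])_m, where M_m[1/r_i] is the localization of M_m at the multiplicative set of powers of r_i, with the induced transition maps. Then (M_m)_m is pro-zero if and only if for every i ∈ {1, …, s} the tower (M_m[1/r_i])_m is pro-zero. -/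
variable {R : Type*} [CommRing R]

/-- A tower of `R`-modules is *pro-zero* (satisfies the trivial Mittag-Leffler condition,
i.e. is isomorphic to `0` in the pro-category) if for every `m` some composite
transition map `P (m+k) → P m` is zero. -/
def IsProZeroTower {P : ℕ → Type*} [∀ m, AddCommGroup (P m)] [∀ m, Module R (P m)]
    (p : ∀ m, P (m + 1) →ₗ[R] P m) : Prop :=
  ∀ m : ℕ, ∃ k : ℕ, towerMap p (Nat.le_add_right m k) = 0

/-!
Localization is a functor, so the composite maps of a localized tower are the localizations of
the composite maps of the tower; this gives the forward direction. Conversely, for fixed `m` the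
finitely many `r i` admit a common `k`, and a linear map that vanishes after inverting each
member of a family generating the unit ideal is zero.
-/

section Tower

variable {P : ℕ → Type*} [∀ m, AddCommGroup (P m)] [∀ m, Module R (P m)]
  (p : ∀ m, P (m + 1) →ₗ[R] P m)

lemma towerMap_self {a : ℕ} (h : a ≤ a) : towerMap p h = LinearMap.id :=
  Nat.leRecOn_self _

lemma towerMap_succ {a b : ℕ} (h : a ≤ b) (h' : a ≤ b + 1) :
    towerMap p h' = towerMap p h ∘ₗ p b :=
  Nat.leRecOn_succ h _

lemma towerMap_comp {a b c : ℕ} (hab : a ≤ b) (hbc : b ≤ c) :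
    towerMap p (hab.trans hbc) = towerMap p hab ∘ₗ towerMap p hbc := by
  induction c, hbc using Nat.le_induction with
  | base => rw [towerMap_self p le_rfl, LinearMap.comp_id]
  | succ c hbc ih =>
    rw [towerMap_succ p (hab.trans hbc), towerMap_succ p hbc, ih, LinearMap.comp_assoc]

lemma towerMap_eq_zero_of_le {m k k' : ℕ} (hk : towerMap p (Nat.le_add_right m k) = 0)
    (hkk' : k ≤ k') : towerMap p (Nat.le_add_right m k') = 0 := by
  rw [towerMap_comp p (Nat.le_add_right m k) (Nat.add_le_add_left hkk' m), hk,
    LinearMap.zero_comp]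

end Tower

lemma LocalizedModule.map_comp {A : Type*} [CommSemiring A] (S : Submonoid A)
    {M N Q : Type*} [AddCommMonoid M] [Module A M] [AddCommMonoid N] [Module A N]
    [AddCommMonoid Q] [Module A Q] (f : M →ₗ[A] N) (g : N →ₗ[A] Q) :
    LocalizedModule.map S (g ∘ₗ f) = LocalizedModule.map S g ∘ₗ LocalizedModule.map S f := by
  ext x
  induction x using LocalizedModule.induction_on
  simp

lemma towerMap_localizedModule_map (S : Submonoid R) {M : ℕ → Type*}
    [∀ m, AddCommGroup (M m)] [∀ m, Module R (M m)] (t : ∀ m, M (m + 1) →ₗ[R] M m)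
    {a b : ℕ} (h : a ≤ b) :
    towerMap (P := fun m => LocalizedModule S (M m)) (fun m => LocalizedModule.map S (t m)) h =
      LocalizedModule.map S (towerMap t h) := by
  induction b, h using Nat.le_induction with
  | base => rw [towerMap_self, towerMap_self, LocalizedModule.map_id]
  | succ b h ih =>
    rw [towerMap_succ (P := fun m => LocalizedModule S (M m)) _ h, towerMap_succ t h, ih,
      LocalizedModule.map_comp]

lemma LinearMap.eq_zero_of_localizedModule_map_eq_zero {A ι : Type*} [CommSemiring A]
    (r : ι → A) (hr : Ideal.span (Set.range r) = ⊤) {M N : Type*} [AddCommMonoid M] [Module A M]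
    [AddCommMonoid N] [Module A N] (f : M →ₗ[A] N)
    (hf : ∀ i, LocalizedModule.map (Submonoid.powers (r i)) f = 0) : f = 0 := by
  ext x
  refine Module.eq_zero_of_isLocalized_span (Set.range r) hr _
    (fun a => LocalizedModule.mkLinearMap (Submonoid.powers a.1) N) (f x) ?_
  rintro ⟨_, i, rfl⟩
  simpa using LinearMap.congr_fun (hf i) (LocalizedModule.mk x 1)

/-- **Pro-vanishing is local.**  If `r 1, …, r s` generate the unit ideal of `R`, then a
tower `(M m)` of `R`-modules is pro-zero if and only if each localized tower
`(M m [1/r i])` is pro-zero. -/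
theorem isProZeroTower_iff_localizations
    {s : ℕ} (r : Fin s → R) (hr : Ideal.span (Set.range r) = ⊤)
    (M : ℕ → Type*) [∀ m, AddCommGroup (M m)] [∀ m, Module R (M m)]
    (t : ∀ m, M (m + 1) →ₗ[R] M m) :
    IsProZeroTower t ↔
      ∀ i : Fin s,
        IsProZeroTower (P := fun m => LocalizedModule (Submonoid.powers (r i)) (M m))
          (fun m => LocalizedModule.map (Submonoid.powers (r i)) (t m)) := by
  constructor
  · intro H i m
    obtain ⟨k, hk⟩ := H m
    exact ⟨k, by rw [towerMap_localizedModule_map, hk, map_zero]⟩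
  · intro H m
    choose k hk using fun i => H i m
    refine ⟨Finset.univ.sup k, LinearMap.eq_zero_of_localizedModule_map_eq_zero r hr _ fun i => ?_⟩
    rw [← towerMap_localizedModule_map]
    exact towerMap_eq_zero_of_le _ (hk i) (Finset.le_sup (Finset.mem_univ i))
end

section
/- Let R → S be a homomorphism of commutative rings, I ⊆ S an ideal, and m ∈ ℕ. Consider the natural S-linear map Ω_{S/R} → Ω_{(S/I^{m+1})/R} of Kähler differentials induced by the surjection S → S/I^{m+1} (the target viewed as an S-module by restriction of scalars). Then the kernel of this map is contained in I^m • Ω_{S/R}. (Since the map is also surjective, this shows that the towers {Ω_{S/R}/I^m•Ω_{S/R}}_m and {Ω_{(S/I^m)/R}}_m are pro-isomorphic.) -/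
/-- `d` of an element of `I^(m+1)` lies in `I^m • Ω[S⁄R]`. -/
lemma D_pow_succ_mem {R S : Type*} [CommRing R] [CommRing S] [Algebra R S] (I : Ideal S) :
    ∀ m : ℕ, ∀ x ∈ I ^ (m + 1),
      KaehlerDifferential.D R S x ∈ I ^ m • (⊤ : Submodule S (Ω[S⁄R])) := by
  intro m
  induction m with
  | zero => intro x _; simp [Submodule.top_smul]
  | succ n ih =>
    intro x hx
    rw [pow_succ] at hx
    refine Submodule.mul_induction_on hx ?_ ?_
    · intro a ha b hb
      rw [Derivation.leibniz]
      refine Submodule.add_mem _ ?_ ?_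
      · exact Submodule.smul_mem_smul ha Submodule.mem_top
      · have h1 : KaehlerDifferential.D R S a ∈ I ^ n • (⊤ : Submodule S (Ω[S⁄R])) := ih a ha
        have : b • KaehlerDifferential.D R S a ∈ I • (I ^ n • (⊤ : Submodule S (Ω[S⁄R]))) :=
          Submodule.smul_mem_smul hb h1
        rwa [← Submodule.smul_assoc, smul_eq_mul, ← pow_succ'] at this
    · intro y z hy hz
      rw [map_add]
      exact Submodule.add_mem _ hy hz

/-- **Pro-systems of Kähler differentials (degree 1).**
For a homomorphism of commutative rings `R → S`, an ideal `I ⊆ S` and `m ∈ ℕ`,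
the kernel of the natural `S`-linear map `Ω[S⁄R] → Ω[(S/I^{m+1})⁄R]` induced by
the surjection `S → S/I^{m+1}` is contained in `I^m • Ω[S⁄R]`.  (Since this map is
also surjective, the towers `{Ω[S⁄R]/I^m•Ω[S⁄R]}` and `{Ω[(S/I^m)⁄R]}` are
pro-isomorphic.) -/
theorem ker_kaehlerDifferential_map_le_pow_smul
    {R S : Type*} [CommRing R] [CommRing S] [Algebra R S] (I : Ideal S) (m : ℕ) :
    LinearMap.ker (KaehlerDifferential.map R R S (S ⧸ I ^ (m + 1))) ≤
      I ^ m • (⊤ : Submodule S (Ω[S⁄R])) := by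
  set J : Ideal S := I ^ (m + 1) with hJ
  set U : Submodule S (Ω[S⁄R]) := I ^ m • ⊤ with hU
  -- the quotient module
  set M := Ω[S⁄R] ⧸ U
  have hJU : ∀ x ∈ J, KaehlerDifferential.D R S x ∈ U := D_pow_succ_mem I m
  -- `M` is killed by `J`
  have ht : Module.IsTorsionBySet S M (J : Set S) := by
    rw [Module.isTorsionBySet_quotient_iff]
    intro x r hr
    have hr' : r ∈ I ^ m := Ideal.pow_le_pow_right (Nat.le_succ m) hr
    exact Submodule.smul_mem_smul hr' Submodule.mem_top
  letI : Module (S ⧸ J) M := ht.module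
  haveI : IsScalarTower S (S ⧸ J) M := Module.IsTorsionBySet.isScalarTower ht
  -- the `R`-linear map `S → M`, `s ↦ mkQ (d s)`, kills `J`
  let f : S →ₗ[R] M := (U.mkQ.restrictScalars R) ∘ₗ
    ((KaehlerDifferential.D R S).toLinearMap.restrictScalars R)
  have hker : J.restrictScalars R ≤ LinearMap.ker f := by
    intro x hx
    rw [LinearMap.mem_ker]
    show U.mkQ (KaehlerDifferential.D R S x) = 0
    rw [Submodule.mkQ_apply, Submodule.Quotient.mk_eq_zero]
    exact hJU x hx
  -- induced `R`-linear map `S/J → M`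
  let lin : (S ⧸ J) →ₗ[R] M :=
    (Submodule.liftQ (J.restrictScalars R) f hker) ∘ₗ
      (Submodule.Quotient.restrictScalarsEquiv R J).symm.toLinearMap
  have hlin : ∀ s : S, lin (Ideal.Quotient.mk J s) = U.mkQ (KaehlerDifferential.D R S s) := by
    intro s; rfl
  -- the induced derivation `S/J → M`
  have surj : Function.Surjective (Ideal.Quotient.mk J) := Ideal.Quotient.mk_surjective
  let δ : Derivation R (S ⧸ J) M :=
    { toLinearMap := lin
      map_one_eq_zero' := by
        have : (1 : S ⧸ J) = Ideal.Quotient.mk J 1 := rfl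
        rw [this, hlin]
        simp
      leibniz' := by
        intro a b
        obtain ⟨s, rfl⟩ := surj a
        obtain ⟨t, rfl⟩ := surj b
        have h1 : Ideal.Quotient.mk J s * Ideal.Quotient.mk J t = Ideal.Quotient.mk J (s * t) :=
          (map_mul _ s t).symm
        rw [h1, hlin, Derivation.leibniz, map_add]
        have h2 : ∀ (c : S) (x : Ω[S⁄R]),
            (Ideal.Quotient.mk J c) • (U.mkQ x) = U.mkQ (c • x) := by
          intro c x
          exact (Module.IsTorsionBySet.mk_smul ht c (U.mkQ x)).trans (map_smul U.mkQ c x).symm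
        rw [hlin, hlin, h2, h2] }
  -- lift to `Ω[(S/J)⁄R]`
  let g : Ω[(S ⧸ J)⁄R] →ₗ[S ⧸ J] M := δ.liftKaehlerDifferential
  -- the composite `Ω[S⁄R] → Ω[(S/J)⁄R] → M` equals the quotient map
  have hcomp : (g.restrictScalars S) ∘ₗ (KaehlerDifferential.map R R S (S ⧸ J)) = U.mkQ := by
    apply Derivation.liftKaehlerDifferential_unique
    ext s
    simp only [Derivation.coe_comp, LinearMap.coe_comp, Function.comp_apply,
      LinearMap.coe_restrictScalars, Derivation.coeFn_coe]
    rw [KaehlerDifferential.map_D]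
    show g (KaehlerDifferential.D R (S ⧸ J) (algebraMap S (S ⧸ J) s)) = U.mkQ _
    rw [Derivation.liftKaehlerDifferential_comp_D]
    exact hlin s
  intro x hx
  have hx0 : KaehlerDifferential.map R R S (S ⧸ J) x = 0 := hx
  have : U.mkQ x = 0 := by
    rw [← hcomp]
    simp [hx0]
  rwa [Submodule.mkQ_apply, Submodule.Quotient.mk_eq_zero] at this
end
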